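/- Let l > 0, k > 0, c > 0 with c·k < 1, and k̃ = k/√(1 − c²k²). Let f ∈ L²(ℝ) with support contained in Ω = [−l, l]. Let σ: ℝ → ℝ be nonnegative with σ = 0 on [−l, l], let η(x) = |∫₀ˣ σ(t) dt|, and let z = z₁ + i z₂ with z₁ ≥ 0, z₂ > 0. Define x̃ = x + (z/k) ∫₀ˣ σ(t) dt, and define the PML-continued solution for |x| > l by u^e(x̃) = (1/(1 − c²k²)²) ∫_{−l}^{l} G_{x̃}(y) f(y) dy, where G_{x̃}(y) = − e^{i k̃ (x̃ − y)}/(2 i k̃) when x > l and G_{x̃}(y) = − e^{−i k̃ (x̃ − y)}/(2 i k̃) when x < −l. Then for all |x| > l, |u^e(x̃)| ≤ (√l / (√2 · k̃ · (1 − c²k²)²)) · e^{−(k̃/k) z₂ η(x)} · ‖f‖_{L²(Ω)}. -/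

import Mathlib

/-! For `y ∈ Ω` the Green kernel has modulus `exp (Re (± i k̃ (x̃ - y))) / (2 k̃)`, and only the
imaginary part `(z₂ / k) ∫₀ˣ σ` of `x̃ - y` enters this real part. Since `σ ≥ 0`, `∫₀ˣ σ` has the
sign of `x`, so in both branches the modulus is `exp (-(k̃/k) z₂ η(x)) / (2 k̃)`, uniformly in `y`.
The integral is then bounded by this constant times `‖f‖_{L¹(Ω)} ≤ √(2l) ‖f‖_{L²(Ω)}`
(Cauchy–Schwarz). -/

open MeasureTheory

theorem integral_norm_le_sqrt_measureReal_univ_mul {α E : Type*} [MeasurableSpace α]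
    {μ : Measure α} [IsFiniteMeasure μ] [NormedAddCommGroup E] {f : α → E} (hf : MemLp f 2 μ) :
    ∫ a, ‖f a‖ ∂μ ≤ √(μ.real Set.univ) * √(∫ a, ‖f a‖ ^ 2 ∂μ) := by
  have h2 : ENNReal.ofReal 2 = 2 := by norm_num
  have holder := integral_mul_le_Lp_mul_Lq_of_nonneg (μ := μ) Real.HolderConjugate.two_two
    (f := fun _ => (1 : ℝ)) (g := fun a => ‖f a‖) (ae_of_all _ fun _ => zero_le_one)
    (ae_of_all _ fun _ => norm_nonneg _) (h2 ▸ memLp_const 1) (h2 ▸ hf.norm)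
  simpa [Real.sqrt_eq_rpow, Real.rpow_two] using holder

theorem norm_intervalIntegral_mul_le {R : Type*} [NormedRing R] [NormedSpace ℝ R]
    [CompleteSpace R] {a b M : ℝ} (hab : a ≤ b) (hM : 0 ≤ M) {K f : ℝ → R}
    (hK : ∀ y ∈ Set.Ioc a b, ‖K y‖ ≤ M) (hf : MemLp f 2 (volume.restrict (Set.Ioc a b))) :
    ‖∫ y in a..b, K y * f y‖ ≤ M * √(b - a) * √(∫ y in a..b, ‖f y‖ ^ 2) := by
  have hfi : IntervalIntegrable (fun y => ‖f y‖) volume a b :=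
    (intervalIntegrable_iff_integrableOn_Ioc_of_le hab).2 (hf.integrable one_le_two).norm
  calc ‖∫ y in a..b, K y * f y‖ ≤ ∫ y in a..b, M * ‖f y‖ :=
        intervalIntegral.norm_integral_le_of_norm_le hab
          (ae_of_all _ fun y hy => (norm_mul_le _ _).trans
            (mul_le_mul_of_nonneg_right (hK y hy) (norm_nonneg _)))
          (hfi.const_mul M)
    _ ≤ M * (√(b - a) * √(∫ y in a..b, ‖f y‖ ^ 2)) := by
        rw [intervalIntegral.integral_const_mul, intervalIntegral.integral_of_le hab,
          intervalIntegral.integral_of_le hab]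
        gcongr
        simpa [hab] using integral_norm_le_sqrt_measureReal_univ_mul hf
    _ = M * √(b - a) * √(∫ y in a..b, ‖f y‖ ^ 2) := (mul_assoc _ _ _).symm

theorem norm_neg_cexp_div_two_I_mul (u : ℂ) {κ : ℝ} (hκ : 0 < κ) :
    ‖-Complex.exp u / (2 * Complex.I * κ)‖ = Real.exp u.re / (2 * κ) := by
  simp [Complex.norm_exp, abs_of_pos hκ]

theorem re_I_mul_stretched_sub (κ x y z₁ z₂ k S : ℝ) :
    (Complex.I * κ * ((x : ℂ) + ((z₁ : ℂ) + (z₂ : ℂ) * Complex.I) / (k : ℂ) * (S : ℂ) - (y : ℂ))).re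
      = -(κ / k) * z₂ * S := by
  simp [Complex.div_ofReal_im]
  ring

theorem pml_decay_exponential_kernel_real_wavenumber_general (l k c : ℝ) (hl : 0 < l) (hk : 0 < k)
    (hc : 0 < c) (hck : c * k < 1)
    (ktilde : ℝ) (hkt : ktilde = k / Real.sqrt (1 - c ^ 2 * k ^ 2))
    (f : ℝ → ℂ) (hf : MemLp f 2 volume)
    (σ : ℝ → ℝ) (hσnn : ∀ t : ℝ, 0 ≤ σ t)
    (z₁ z₂ : ℝ) :
    ∀ x : ℝ, l < |x| →
      ‖(((1 / (1 - c ^ 2 * k ^ 2) ^ 2 : ℝ) : ℂ) * ∫ y in (-l)..l,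
          (if l < x then
            -Complex.exp (Complex.I * (ktilde : ℂ) *
              (((x : ℂ) + (((z₁ : ℂ) + (z₂ : ℂ) * Complex.I) / (k : ℂ)) *
                ((∫ t in (0:ℝ)..x, σ t : ℝ) : ℂ)) - (y : ℂ))) / (2 * Complex.I * (ktilde : ℂ))
          else
            -Complex.exp (-Complex.I * (ktilde : ℂ) *
              (((x : ℂ) + (((z₁ : ℂ) + (z₂ : ℂ) * Complex.I) / (k : ℂ)) *
                ((∫ t in (0:ℝ)..x, σ t : ℝ) : ℂ)) - (y : ℂ))) / (2 * Complex.I * (ktilde : ℂ)))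
          * f y)‖
        ≤ (Real.sqrt l / (Real.sqrt 2 * ktilde * (1 - c ^ 2 * k ^ 2) ^ 2)) *
            Real.exp (-(ktilde / k) * z₂ * |∫ t in (0:ℝ)..x, σ t|) *
            Real.sqrt (∫ y in (-l)..l, ‖f y‖ ^ 2) := by
  intro x hx
  set S := ∫ t in (0:ℝ)..x, σ t
  have hd : 0 < 1 - c ^ 2 * k ^ 2 := by nlinarith [mul_pos hc hk]
  have hkt₀ : 0 < ktilde := hkt ▸ div_pos hk (Real.sqrt_pos.2 hd)
  rw [norm_mul, Complex.norm_real, Real.norm_of_nonneg (by positivity)]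
  calc _ ≤ 1 / (1 - c ^ 2 * k ^ 2) ^ 2 * (Real.exp (-(ktilde / k) * z₂ * |S|) / (2 * ktilde)
          * √(l - -l) * √(∫ y in (-l)..l, ‖f y‖ ^ 2)) := by
        gcongr
        refine norm_intervalIntegral_mul_le (by linarith) (by positivity) (fun y _ => ?_)
          (hf.restrict _)
        split_ifs with hxl
        · have hS : 0 ≤ S := intervalIntegral.integral_nonneg (by linarith) fun t _ => hσnn t
          rw [norm_neg_cexp_div_two_I_mul _ hkt₀, re_I_mul_stretched_sub, abs_of_nonneg hS]
        · have hx₀ : x ≤ 0 := not_lt.1 fun h => hxl (abs_of_pos h ▸ hx)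
          have hS : S ≤ 0 := by
            have := intervalIntegral.integral_nonneg (μ := volume) hx₀ fun t _ => hσnn t
            rwa [intervalIntegral.integral_symm, neg_nonneg] at this
          rw [norm_neg_cexp_div_two_I_mul _ hkt₀, neg_mul, neg_mul, Complex.neg_re,
            re_I_mul_stretched_sub, abs_of_nonpos hS]
          exact le_of_eq (by ring_nf)
    _ = _ := by
        rw [show l - -l = 2 * l by ring, Real.sqrt_mul zero_le_two]
        field_simp
        rw [Real.sq_sqrt zero_le_two]

/-- Theorem 3.1, case 1 (real `k̃ = k/√(1−c²k²) > 0`), bound for the solution `u^e` with the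
exponential kernel: for `|x| > l`,
`|u^e(x̃)| ≤ (√l/(√2 k̃ (1−c²k²)²)) e^{−(k̃/k) z₂ η(x)} ‖f‖_{L²(Ω)}`. -/
theorem pml_decay_exponential_kernel_real_wavenumber (l k c : ℝ) (hl : 0 < l) (hk : 0 < k)
    (hc : 0 < c) (hck : c * k < 1)
    (ktilde : ℝ) (hkt : ktilde = k / Real.sqrt (1 - c ^ 2 * k ^ 2))
    (f : ℝ → ℂ) (hf : MemLp f 2 volume)
    (hsupp : ∀ x : ℝ, x ∉ Set.Icc (-l) l → f x = 0)
    (σ : ℝ → ℝ) (hσint : LocallyIntegrable σ) (hσnn : ∀ t : ℝ, 0 ≤ σ t)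
    (hσ0 : ∀ t ∈ Set.Icc (-l) l, σ t = 0)
    (z₁ z₂ : ℝ) (hz₁ : 0 ≤ z₁) (hz₂ : 0 < z₂) :
    ∀ x : ℝ, l < |x| →
      ‖(((1 / (1 - c ^ 2 * k ^ 2) ^ 2 : ℝ) : ℂ) * ∫ y in (-l)..l,
          (if l < x then
            -Complex.exp (Complex.I * (ktilde : ℂ) *
              (((x : ℂ) + (((z₁ : ℂ) + (z₂ : ℂ) * Complex.I) / (k : ℂ)) *
                ((∫ t in (0:ℝ)..x, σ t : ℝ) : ℂ)) - (y : ℂ))) / (2 * Complex.I * (ktilde : ℂ))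
          else
            -Complex.exp (-Complex.I * (ktilde : ℂ) *
              (((x : ℂ) + (((z₁ : ℂ) + (z₂ : ℂ) * Complex.I) / (k : ℂ)) *
                ((∫ t in (0:ℝ)..x, σ t : ℝ) : ℂ)) - (y : ℂ))) / (2 * Complex.I * (ktilde : ℂ)))
          * f y)‖
        ≤ (Real.sqrt l / (Real.sqrt 2 * ktilde * (1 - c ^ 2 * k ^ 2) ^ 2)) *
            Real.exp (-(ktilde / k) * z₂ * |∫ t in (0:ℝ)..x, σ t|) *
            Real.sqrt (∫ y in (-l)..l, ‖f y‖ ^ 2) :=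
  pml_decay_exponential_kernel_real_wavenumber_general l k c hl hk hc hck ktilde hkt f hf σ hσnn z₁
    z₂
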